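/- Let A = [a_{ij}] and B = [b_{ij}] be n × n positive definite complex matrices, and let 2 ≤ p ≤ n. Then the following two chains of real inequalities hold: det(A_p ∘ B_p)/det(A_{p−1} ∘ B_{p−1}) ≥ a_{pp} · det B_p / det B_{p−1} ≥ det(A_p B_p)/det(A_{p−1} B_{p−1}), and det(A_p ∘ B_p)/det(A_{p−1} ∘ B_{p−1}) ≥ b_{pp} · det A_p / det A_{p−1} ≥ det(A_p B_p)/det(A_{p−1} B_{p−1}), where A_p and B_p are the p × p leading principal submatrices. -/

import Mathlib

open Matrix ComplexOrder

/-- The `p × p` leading principal submatrix `A_p` (for `p ≤ n`) of an `n × n` matrix. -/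
def leadSub {n : ℕ} (A : Matrix (Fin n) (Fin n) ℂ) (p : ℕ) (h : p ≤ n) :
    Matrix (Fin p) (Fin p) ℂ :=
  A.submatrix (Fin.castLE h) (Fin.castLE h)

/-!
Let `C, D` be positive definite of size `p`, `C'` the leading block of `C` of size `p - 1` and `b`
the rest of its last column. The Schur complement `s = c_pp - b* C'⁻¹ b = det C / det C'` is at most
`c_pp`, which is the second inequality of each chain (the last step of Fischer's inequality).
For the first, `C = C₀ + s E_pp` with `C₀ = [[C', b], [b*, b* C'⁻¹ b]]` positive semidefinite.
By the Schur product theorem `C₀ ∘ D` is positive semidefinite, so its Schur complement is nonnegative;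
equivalently, the Schur complement `det (C ∘ D) / det (C' ∘ D')` of `C ∘ D` is at least `s d_pp`.
-/

namespace Matrix

theorem fromBlocks_hadamard_fromBlocks {l m n o α : Type*} [Mul α]
    (A : Matrix n l α) (B : Matrix n m α) (C : Matrix o l α) (D : Matrix o m α)
    (A' : Matrix n l α) (B' : Matrix n m α) (C' : Matrix o l α) (D' : Matrix o m α) :
    fromBlocks A B C D ⊙ fromBlocks A' B' C' D' =
      fromBlocks (A ⊙ A') (B ⊙ B') (C ⊙ C') (D ⊙ D') := by
  ext (i | i) (j | j) <;> rfl

theorem IsHermitian.fromBlocks_toBlocks {m n α : Type*} [Star α] {M : Matrix (m ⊕ n) (m ⊕ n) α}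
    (hM : M.IsHermitian) :
    Matrix.fromBlocks M.toBlocks₁₁ M.toBlocks₁₂ M.toBlocks₁₂ᴴ M.toBlocks₂₂ = M := by
  conv_rhs => rw [← M.fromBlocks_toBlocks]
  congr
  ext i j
  exact hM.apply (Sum.inr i) (Sum.inl j)

variable {ι κ 𝕜 : Type*} [Fintype ι] [Fintype κ] [DecidableEq ι] [RCLike 𝕜]

theorem PosDef.det_fromBlocks [DecidableEq κ] {A : Matrix ι ι 𝕜} (hA : A.PosDef)
    (B : Matrix ι κ 𝕜) (D : Matrix κ κ 𝕜) :
    (fromBlocks A B Bᴴ D).det = A.det * (D - Bᴴ * A⁻¹ * B).det := by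
  have := hA.isUnit.invertible
  rw [det_fromBlocks₁₁, invOf_eq_nonsing_inv]

theorem posSemidef_schur_hadamard_sub {A A' : Matrix ι ι 𝕜} (hA : A.PosDef) (hA' : A'.PosDef)
    (B B' : Matrix ι κ 𝕜) (D D' : Matrix κ κ 𝕜) (hM' : (fromBlocks A' B' B'ᴴ D').PosSemidef) :
    (D ⊙ D' - (B ⊙ B')ᴴ * (A ⊙ A')⁻¹ * (B ⊙ B') - (D - Bᴴ * A⁻¹ * B) ⊙ D').PosSemidef := by
  have := hA.isUnit.invertible
  have := (hA.hadamard hA').isUnit.invertible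
  have hP : (fromBlocks A B Bᴴ (Bᴴ * A⁻¹ * B)).PosSemidef :=
    (hA.fromBlocks₁₁ B _).2 (by simpa using PosSemidef.zero)
  have hPM' := hP.hadamard hM'
  rw [fromBlocks_hadamard_fromBlocks, ← conjTranspose_hadamard, hadamard_comm B',
    (hA.hadamard hA').fromBlocks₁₁] at hPM'
  have hsub : (D - Bᴴ * A⁻¹ * B) ⊙ D' = D ⊙ D' - (Bᴴ * A⁻¹ * B) ⊙ D' := by
    ext i j
    exact sub_mul _ _ _
  rw [hsub, sub_sub_sub_cancel_left]
  exact hPM'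

section LastBlock

variable {M N : Matrix (ι ⊕ Fin 1) (ι ⊕ Fin 1) 𝕜}

theorem PosDef.det_le_mul_det_toBlocks₁₁ (hM : M.PosDef) :
    M.det ≤ M (.inr 0) (.inr 0) * M.toBlocks₁₁.det := by
  have hA : M.toBlocks₁₁.PosDef := hM.submatrix Sum.inl_injective
  obtain ⟨A, B, D, rfl⟩ : ∃ A B D, M = fromBlocks A B Bᴴ D :=
    ⟨_, _, _, hM.1.fromBlocks_toBlocks.symm⟩
  rw [toBlocks_fromBlocks₁₁] at hA ⊢
  have hBAB : 0 ≤ (Bᴴ * A⁻¹ * B) 0 0 :=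
    (hA.inv.posSemidef.conjTranspose_mul_mul_same B).diag_nonneg
  rw [hA.det_fromBlocks, det_fin_one, fromBlocks_apply₂₂, mul_comm, sub_apply]
  exact mul_le_mul_of_nonneg_right (sub_le_self _ hBAB) hA.det_pos.le

theorem PosDef.det_mul_mul_det_hadamard_toBlocks₁₁_le (hM : M.PosDef) (hN : N.PosDef) :
    M.det * N (.inr 0) (.inr 0) * (M.toBlocks₁₁ ⊙ N.toBlocks₁₁).det ≤
      M.toBlocks₁₁.det * (M ⊙ N).det := by
  have hA : M.toBlocks₁₁.PosDef := hM.submatrix Sum.inl_injective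
  have hA' : N.toBlocks₁₁.PosDef := hN.submatrix Sum.inl_injective
  obtain ⟨A, B, D, rfl⟩ : ∃ A B D, M = fromBlocks A B Bᴴ D :=
    ⟨_, _, _, hM.1.fromBlocks_toBlocks.symm⟩
  obtain ⟨A', B', D', rfl⟩ : ∃ A B D, N = fromBlocks A B Bᴴ D :=
    ⟨_, _, _, hN.1.fromBlocks_toBlocks.symm⟩
  simp only [toBlocks_fromBlocks₁₁] at hA hA' ⊢
  have hschur := (posSemidef_schur_hadamard_sub hA hA' B B' D D' hN.posSemidef).diag_nonneg
    (i := 0)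
  rw [sub_apply, sub_nonneg, hadamard_apply] at hschur
  rw [fromBlocks_hadamard_fromBlocks, ← conjTranspose_hadamard, hadamard_comm B',
    (hA.hadamard hA').det_fromBlocks, hA.det_fromBlocks, det_fin_one, det_fin_one,
    fromBlocks_apply₂₂]
  calc A.det * (D - Bᴴ * A⁻¹ * B) 0 0 * D' 0 0 * (A ⊙ A').det
      = (A.det * (A ⊙ A').det) * ((D - Bᴴ * A⁻¹ * B) 0 0 * D' 0 0) := by ring
    _ ≤ (A.det * (A ⊙ A').det) * (D ⊙ D' - (B ⊙ B')ᴴ * (A ⊙ A')⁻¹ * (B ⊙ B')) 0 0 :=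
        mul_le_mul_of_nonneg_left hschur (mul_nonneg hA.det_pos.le (hA.hadamard hA').det_pos.le)
    _ = _ := by ring

end LastBlock

section LeadingPrincipal

variable {m : ℕ} {C D : Matrix (Fin (m + 1)) (Fin (m + 1)) 𝕜}

theorem PosDef.det_le_mul_det_submatrix_castSucc (hC : C.PosDef) :
    C.det ≤ C (Fin.last m) (Fin.last m) * (C.submatrix Fin.castSucc Fin.castSucc).det := by
  have := (hC.submatrix finSumFinEquiv.injective).det_le_mul_det_toBlocks₁₁
  rwa [det_submatrix_equiv_self] at this

theorem PosDef.det_mul_mul_det_hadamard_submatrix_castSucc_le (hC : C.PosDef) (hD : D.PosDef) :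
    C.det * D (Fin.last m) (Fin.last m) *
        (C.submatrix Fin.castSucc Fin.castSucc ⊙ D.submatrix Fin.castSucc Fin.castSucc).det ≤
      (C.submatrix Fin.castSucc Fin.castSucc).det * (C ⊙ D).det := by
  have := (hC.submatrix finSumFinEquiv.injective).det_mul_mul_det_hadamard_toBlocks₁₁_le
    (hD.submatrix finSumFinEquiv.injective)
  rwa [← submatrix_hadamard, det_submatrix_equiv_self, det_submatrix_equiv_self] at this

end LeadingPrincipal

theorem PosDef.det_hadamard_ratio_chain {m : ℕ} {C D : Matrix (Fin (m + 1)) (Fin (m + 1)) ℂ}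
    (hC : C.PosDef) (hD : D.PosDef) :
    (C ⊙ D).det.re / (C.submatrix Fin.castSucc Fin.castSucc ⊙
          D.submatrix Fin.castSucc Fin.castSucc).det.re ≥
        (D (Fin.last m) (Fin.last m)).re * C.det.re /
          (C.submatrix Fin.castSucc Fin.castSucc).det.re ∧
      (D (Fin.last m) (Fin.last m)).re * C.det.re /
          (C.submatrix Fin.castSucc Fin.castSucc).det.re ≥
        (C * D).det.re / (C.submatrix Fin.castSucc Fin.castSucc *
          D.submatrix Fin.castSucc Fin.castSucc).det.re := by
  have hC' := hC.submatrix (Fin.castSucc_injective m)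
  have hD' := hD.submatrix (Fin.castSucc_injective m)
  have im_eq_zero {z : ℂ} (hz : 0 < z) : z.im = 0 := (Complex.pos_iff.1 hz).2.symm
  have hstep := (Complex.le_def.1 (hC.det_mul_mul_det_hadamard_submatrix_castSucc_le hD)).1
  have hfischer := (Complex.le_def.1 hD.det_le_mul_det_submatrix_castSucc).1
  simp only [Complex.mul_re, Complex.mul_im, im_eq_zero hC.det_pos,
    im_eq_zero hD'.det_pos, im_eq_zero (hC'.hadamard hD').det_pos,
    im_eq_zero (hC.hadamard hD).det_pos, im_eq_zero (hD.diag_pos (i := Fin.last m)),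
    mul_zero, zero_mul, sub_zero, add_zero] at hstep hfischer
  have hCr := (Complex.pos_iff.1 hC.det_pos).1
  have hC'r := (Complex.pos_iff.1 hC'.det_pos).1
  have hD'r := (Complex.pos_iff.1 hD'.det_pos).1
  have hH'r := (Complex.pos_iff.1 (hC'.hadamard hD').det_pos).1
  simp only [det_mul, Complex.mul_re, im_eq_zero hC.det_pos, im_eq_zero hC'.det_pos, zero_mul,
    sub_zero]
  constructor
  · rw [ge_iff_le, div_le_div_iff₀ hC'r hH'r]
    linarith
  · rw [ge_iff_le, div_le_div_iff₀ (mul_pos hC'r hD'r) hC'r]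
    nlinarith [mul_le_mul_of_nonneg_left hfischer (mul_pos hCr hC'r).le]

end Matrix

/-- For `n × n` positive definite matrices `A, B` and `2 ≤ p ≤ n`, the two chains
`det(A_p∘B_p)/det(A_{p-1}∘B_{p-1}) ≥ a_{pp} det B_p/det B_{p-1} ≥ det(A_pB_p)/det(A_{p-1}B_{p-1})`
and
`det(A_p∘B_p)/det(A_{p-1}∘B_{p-1}) ≥ b_{pp} det A_p/det A_{p-1} ≥ det(A_pB_p)/det(A_{p-1}B_{p-1})`
hold. -/
theorem det_ratio_chains {n : ℕ} (A B : Matrix (Fin n) (Fin n) ℂ)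
    (hA : A.PosDef) (hB : B.PosDef) (p : ℕ) (hp2 : 2 ≤ p) (hpn : p ≤ n) :
    ((Matrix.hadamard (leadSub A p hpn) (leadSub B p hpn)).det.re /
          (Matrix.hadamard (leadSub A (p - 1) (by omega)) (leadSub B (p - 1) (by omega))).det.re ≥
        (A ⟨p - 1, by omega⟩ ⟨p - 1, by omega⟩).re *
          (leadSub B p hpn).det.re / (leadSub B (p - 1) (by omega)).det.re ∧
      (A ⟨p - 1, by omega⟩ ⟨p - 1, by omega⟩).re *
          (leadSub B p hpn).det.re / (leadSub B (p - 1) (by omega)).det.re ≥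
        (leadSub A p hpn * leadSub B p hpn).det.re /
          (leadSub A (p - 1) (by omega) * leadSub B (p - 1) (by omega)).det.re) ∧
    ((Matrix.hadamard (leadSub A p hpn) (leadSub B p hpn)).det.re /
          (Matrix.hadamard (leadSub A (p - 1) (by omega)) (leadSub B (p - 1) (by omega))).det.re ≥
        (B ⟨p - 1, by omega⟩ ⟨p - 1, by omega⟩).re *
          (leadSub A p hpn).det.re / (leadSub A (p - 1) (by omega)).det.re ∧
      (B ⟨p - 1, by omega⟩ ⟨p - 1, by omega⟩).re *
          (leadSub A p hpn).det.re / (leadSub A (p - 1) (by omega)).det.re ≥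
        (leadSub A p hpn * leadSub B p hpn).det.re /
          (leadSub A (p - 1) (by omega) * leadSub B (p - 1) (by omega)).det.re) := by
  obtain ⟨m, rfl⟩ : ∃ m, p = m + 1 := ⟨p - 1, by omega⟩
  have hAp : (leadSub A (m + 1) hpn).PosDef := hA.submatrix (Fin.castLE_injective hpn)
  have hBp : (leadSub B (m + 1) hpn).PosDef := hB.submatrix (Fin.castLE_injective hpn)
  refine ⟨?_, hAp.det_hadamard_ratio_chain hBp⟩
  have hBA := hBp.det_hadamard_ratio_chain hAp
  rwa [hadamard_comm, hadamard_comm ((leadSub B _ _).submatrix _ _), det_mul_comm,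
    det_mul_comm ((leadSub B _ _).submatrix _ _)] at hBA
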